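/- Let C be a k-dimensional ZMod 2-linear subspace of (Fin n → ZMod 2), fix a coordinate l₀, and let p, p' : Fin n → ℝ be probability vectors with 0 ≤ p i ≤ 1 that agree at every coordinate except l₀, where 0 ≤ p' l₀ ≤ p l₀ ≤ 1. Assume p j < 1/2 for every coordinate j ≠ l₀. Then P_{p'}[C] ≥ P_p[C]; that is, the probability of the set of codewords does not decrease when a single coordinate 1-probability is lowered, all other coordinate 1-probabilities being below 1/2. -/
import Mathlib

open Finset

noncomputable def eps (b : ZMod 2) : ℝ := if b = 1 then -1 else 1

lemma eps_zero : eps 0 = 1 := by simp [eps]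

lemma eps_one : eps 1 = -1 := by simp [eps]

lemma zmod2_cases (a : ZMod 2) : a = 0 ∨ a = 1 := by revert a; decide

lemma eps_add (a b : ZMod 2) : eps (a + b) = eps a * eps b := by
  rcases zmod2_cases a with ha | ha <;> rcases zmod2_cases b with hb | hb <;>
    subst ha <;> subst hb <;> simp [eps, show (1+1 : ZMod 2) = 0 from by decide]

lemma eps_sum {ι : Type*} (s : Finset ι) (f : ι → ZMod 2) :
    eps (∑ i ∈ s, f i) = ∏ i ∈ s, eps (f i) := by
  induction s using Finset.cons_induction with
  | empty => simp [eps_zero]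
  | cons a s ha ih => rw [Finset.sum_cons, Finset.prod_cons, eps_add, ih]

open Finset Classical in
lemma char_sum_nonneg {n : ℕ} (C : Submodule (ZMod 2) (Fin n → ZMod 2)) (χ : Fin n → ZMod 2) :
    0 ≤ ∑ x : Fin n → ZMod 2, (if x ∈ C then eps (∑ i, χ i * x i) else 0) := by
  classical
  by_cases h : ∀ x ∈ C, (∑ i, χ i * x i) = 0
  · apply Finset.sum_nonneg; intro x _
    by_cases hx : x ∈ C
    · simp [hx, h x hx, eps_zero]
    · simp [hx]
  · push_neg at h
    obtain ⟨x₀, hx₀C, hx₀⟩ := h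
    have hx₀1 : (∑ i, χ i * x₀ i) = 1 := by
      rcases zmod2_cases (∑ i, χ i * x₀ i) with h' | h'
      · exact absurd h' hx₀
      · exact h'
    have hself : ∀ y : Fin n → ZMod 2, y + y = 0 := by
      intro y; funext i
      rcases zmod2_cases (y i) with h' | h' <;> simp [h'] <;> decide
    have hmem : ∀ x : Fin n → ZMod 2, (x + x₀ ∈ C ↔ x ∈ C) := by
      intro x
      constructor
      · intro hx
        have := C.add_mem hx hx₀C
        rwa [add_assoc, hself, add_zero] at this
      · intro hx; exact C.add_mem hx hx₀C
    set S := ∑ x : Fin n → ZMod 2, (if x ∈ C then eps (∑ i, χ i * x i) else 0) with hS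
    have key : S = -S := by
      calc S = ∑ x : Fin n → ZMod 2, (if x + x₀ ∈ C then eps (∑ i, χ i * (x + x₀) i) else 0) :=
            (Fintype.sum_equiv (Equiv.addRight x₀)
              (fun x => if x + x₀ ∈ C then eps (∑ i, χ i * (x + x₀) i) else 0)
              (fun x => if x ∈ C then eps (∑ i, χ i * x i) else 0)
              (fun x => rfl)).symm
        _ = -S := by
            rw [hS, ← Finset.sum_neg_distrib]
            apply Finset.sum_congr rfl
            intro x _
            rw [hmem x]
            by_cases hx : x ∈ C
            · simp only [hx, if_true]
              have : (∑ i, χ i * (x + x₀) i) = (∑ i, χ i * x i) + 1 := by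
                rw [← hx₀1, ← Finset.sum_add_distrib]
                apply Finset.sum_congr rfl
                intro i _
                simp [Pi.add_apply, mul_add]
              rw [this, eps_add, eps_one]; ring
            · simp [hx]
    linarith

lemma zmod2_sum (g : ZMod 2 → ℝ) : ∑ b : ZMod 2, g b = g 0 + g 1 := by
  rw [show (Finset.univ : Finset (ZMod 2)) = {0, 1} from by decide]
  rw [Finset.sum_insert (by decide), Finset.sum_singleton]

open Finset in
lemma fourier2 {n : ℕ} (v0 v1 : Fin n → ℝ) (y : Fin n → ZMod 2) :
    ∑ χ : Fin n → ZMod 2, eps (∑ i, χ i * y i) * ∏ i, (v0 i + eps (χ i) * v1 i)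
      = 2 ^ n * ∏ i, (if y i = 1 then v1 i else v0 i) := by
  have h1 : ∀ χ : Fin n → ZMod 2, eps (∑ i, χ i * y i) * ∏ i, (v0 i + eps (χ i) * v1 i)
      = ∏ i, (eps (χ i * y i) * (v0 i + eps (χ i) * v1 i)) := by
    intro χ; rw [eps_sum, ← Finset.prod_mul_distrib]
  simp_rw [h1]
  rw [← Fintype.prod_sum (fun (i : Fin n) (b : ZMod 2) => eps (b * y i) * (v0 i + eps b * v1 i))]
  have h2 : ∀ i, (∑ b : ZMod 2, eps (b * y i) * (v0 i + eps b * v1 i))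
      = 2 * (if y i = 1 then v1 i else v0 i) := by
    intro i
    rw [zmod2_sum]
    rcases zmod2_cases (y i) with h' | h' <;>
      simp [h', eps_zero, eps_one, eps_add] <;> ring
  simp_rw [h2]
  rw [Finset.prod_mul_distrib, Finset.prod_const, Finset.card_univ, Fintype.card_fin]

open Finset Classical in
lemma key_nonneg {n : ℕ} (C : Submodule (ZMod 2) (Fin n → ZMod 2))
    (v0 v1 : Fin n → ℝ) (hv : ∀ i, 0 ≤ v1 i ∧ v1 i ≤ v0 i) (χ₀ : Fin n → ZMod 2) :
    0 ≤ ∑ x : Fin n → ZMod 2,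
      (if x ∈ C then eps (∑ i, χ₀ i * x i) * ∏ i, (if x i = 1 then v1 i else v0 i) else 0) := by
  classical
  have h2n : (0:ℝ) < 2 ^ n := by positivity
  rw [← mul_nonneg_iff_of_pos_left h2n, Finset.mul_sum]
  have hswap : ∀ x : Fin n → ZMod 2,
      (2:ℝ) ^ n * (if x ∈ C then eps (∑ i, χ₀ i * x i) * ∏ i, (if x i = 1 then v1 i else v0 i) else 0)
      = ∑ χ : Fin n → ZMod 2,
          (if x ∈ C then eps (∑ i, (χ₀ + χ) i * x i) else 0) * ∏ i, (v0 i + eps (χ i) * v1 i) := by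
    intro x
    by_cases hx : x ∈ C
    · simp only [hx, if_true]
      rw [← mul_assoc, mul_comm ((2:ℝ)^n), mul_assoc, ← fourier2 v0 v1 x, Finset.mul_sum]
      apply Finset.sum_congr rfl
      intro χ _
      have hdot : (∑ i, (χ₀ + χ) i * x i) = (∑ i, χ₀ i * x i) + (∑ i, χ i * x i) := by
        rw [← Finset.sum_add_distrib]
        exact Finset.sum_congr rfl fun i _ => by simp [add_mul]
      rw [hdot, eps_add]; ring
    · simp [hx]
  simp_rw [hswap]
  rw [Finset.sum_comm]
  apply Finset.sum_nonneg
  intro χ _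
  rw [← Finset.sum_mul]
  apply mul_nonneg
  · exact char_sum_nonneg C (χ₀ + χ)
  · apply Finset.prod_nonneg
    intro i _
    rcases zmod2_cases (χ i) with h' | h' <;> rw [h']
    · rw [eps_zero]; nlinarith [(hv i).1, (hv i).2]
    · rw [eps_one]; nlinarith [(hv i).1, (hv i).2]


open Classical in
/-- Probability of a set of bit-vectors under independent, not necessarily identically
distributed bits with coordinate 1-probabilities `p`. -/
noncomputable def probOf {n : ℕ} (p : Fin n → ℝ) (S : Set (Fin n → ZMod 2)) : ℝ :=
  ∑ x : Fin n → ZMod 2,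
    if x ∈ S then (∏ i, if x i = 1 then p i else 1 - p i) else 0

/-- When all coordinate 1-probabilities other than the one at `l₀` are below
`1/2`, lowering the 1-probability at coordinate `l₀` does not decrease the probability of
the set of codewords. -/
theorem codeword_prob_mono_in_single_coordinate {n k : ℕ}
    (C : Submodule (ZMod 2) (Fin n → ZMod 2))
    (hk : Module.finrank (ZMod 2) C = k)
    (l₀ : Fin n) (p p' : Fin n → ℝ)
    (hp : ∀ i, 0 ≤ p i ∧ p i ≤ 1)
    (hagree : ∀ j, j ≠ l₀ → p' j = p j)
    (h0 : 0 ≤ p' l₀) (h1 : p' l₀ ≤ p l₀) (h2 : p l₀ ≤ 1)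
    (hlt : ∀ j, j ≠ l₀ → p j < 1 / 2) :
    probOf p (C : Set _) ≤ probOf p' (C : Set _) := by
  classical
  set v0 : Fin n → ℝ := fun i => if i = l₀ then 1 else 1 - p i with hv0
  set v1 : Fin n → ℝ := fun i => if i = l₀ then 1 else p i with hv1
  set R : (Fin n → ZMod 2) → ℝ := fun x => ∏ i, (if x i = 1 then v1 i else v0 i) with hR
  set T : ℝ := ∑ x : Fin n → ZMod 2, (if x ∈ C then R x else 0) with hT
  set K : ℝ := ∑ x : Fin n → ZMod 2, (if x ∈ C then eps (x l₀) * R x else 0) with hK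
  -- K is nonnegative
  have hKnn : 0 ≤ K := by
    have hv : ∀ i, 0 ≤ v1 i ∧ v1 i ≤ v0 i := by
      intro i
      by_cases hi : i = l₀
      · simp [hv0, hv1, hi]
      · have := hp i
        have := hlt i hi
        constructor
        · simp only [hv1, hi, if_false]; linarith [(hp i).1]
        · simp only [hv0, hv1, hi, if_false]; linarith
    have := key_nonneg C v0 v1 hv (fun i => if i = l₀ then 1 else 0)
    have hdot : ∀ x : Fin n → ZMod 2,
        (∑ i, (if i = l₀ then (1 : ZMod 2) else 0) * x i) = x l₀ := by
      intro x
      simp [ite_mul, Finset.sum_ite_eq']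
    rw [hK]
    convert this using 2 with x
    rw [hdot x]
  -- Expansion of probOf
  have hexp : ∀ q : Fin n → ℝ, (∀ j, j ≠ l₀ → q j = p j) →
      probOf q (C : Set _) = (1/2) * T + ((1 - 2 * q l₀)/2) * K := by
    intro q hq
    have hpt : ∀ x : Fin n → ZMod 2,
        (∏ i, if x i = 1 then q i else 1 - q i)
          = 1/2 * R x + ((1 - 2 * q l₀)/2) * (eps (x l₀) * R x) := by
      intro x
      have hQ : R x = ∏ i ∈ Finset.univ.erase l₀, (if x i = 1 then q i else 1 - q i) := by
        simp only [hR]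
        rw [← Finset.mul_prod_erase Finset.univ _ (Finset.mem_univ l₀)]
        have hhead : (if x l₀ = 1 then v1 l₀ else v0 l₀) = 1 := by
          by_cases h' : x l₀ = 1 <;> simp [h', hv0, hv1]
        rw [hhead, one_mul]
        apply Finset.prod_congr rfl
        intro i hi
        have hil : i ≠ l₀ := Finset.ne_of_mem_erase hi
        simp only [hv0, hv1, hil, if_false, hq i hil]
      rw [← Finset.mul_prod_erase Finset.univ _ (Finset.mem_univ l₀), ← hQ]
      rcases zmod2_cases (x l₀) with h' | h'
      · rw [h', eps_zero]
        rw [if_neg (show ¬((0 : ZMod 2) = 1) from by decide)]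
        ring
      · rw [h', eps_one]
        rw [if_pos rfl]
        ring
    have step : probOf q (C : Set _)
        = ∑ x : Fin n → ZMod 2, ((1/2) * (if x ∈ C then R x else 0)
            + ((1 - 2 * q l₀)/2) * (if x ∈ C then eps (x l₀) * R x else 0)) := by
      rw [probOf]
      apply Finset.sum_congr rfl
      intro x _
      by_cases hx : x ∈ C
      · simp only [SetLike.mem_coe, hx, if_true, hpt x]
      · simp [hx]
    rw [step, Finset.sum_add_distrib, ← Finset.mul_sum, ← Finset.mul_sum, ← hT, ← hK]
  rw [hexp p (fun j _ => rfl), hexp p' hagree]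
  have : (1 - 2 * p l₀)/2 ≤ (1 - 2 * p' l₀)/2 := by linarith
  nlinarith [hKnn]
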